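/- arXiv:math/0407440 — 2 statements merged into one kernel-verified Lean document; each statement's English description precedes it below -/
import Mathlib

section
/- For every regular uncountable cardinal κ, the cofinality of the unequality number U_κ is greater than κ. -/
open Cardinal Set

namespace PaperFormal

noncomputable section

/-- The least (small) cardinality of a family `F : Set X` satisfying `P`. -/
def leastCard {X : Type 1} (P : Set X → Prop) : Cardinal.{0} :=
  sInf {c : Cardinal.{0} | ∃ F : Set X, P F ∧ Cardinal.lift.{1} c = #F}

/-- The collection of (codings of) functions from `κ` to `κ`. -/
def funOn (κ : Cardinal.{0}) : Set (Ordinal.{0} → Ordinal.{0}) :=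
  {f | ∀ α < κ.ord, f α < κ.ord}

/-- The unequality number `U_κ`. -/
def uneq (κ : Cardinal.{0}) : Cardinal.{0} :=
  leastCard fun F : Set (Ordinal.{0} → Ordinal.{0}) => F ⊆ funOn κ ∧
    ∀ g ∈ funOn κ, ∃ f ∈ F, {α | α < κ.ord ∧ f α = g α} = ∅

/-- The dominating number `d_κ`. -/
def domNum (κ : Cardinal.{0}) : Cardinal.{0} :=
  leastCard fun F : Set (Ordinal.{0} → Ordinal.{0}) => F ⊆ funOn κ ∧
    ∀ g ∈ funOn κ, ∃ f ∈ F, ∀ α < κ.ord, g α < f α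

/-- The number `d̄_κ`. -/
def domBar (κ : Cardinal.{0}) : Cardinal.{0} :=
  leastCard fun X : Set (Ordinal.{0} → Ordinal.{0}) => X ⊆ funOn κ ∧
    ∀ g ∈ funOn κ, ∃ x ⊆ X, x.Nonempty ∧ #x < Cardinal.lift.{1} κ ∧
      ∀ α < κ.ord, g α < sSup {o | ∃ f ∈ x, f α = o}

/-- The generalized Cantor space `^ρ2`, with points coded as subsets of `Iio ρ.ord`. -/
def cantor (ρ : Cardinal.{0}) : Set (Set Ordinal.{0}) := {x | x ⊆ Iio ρ.ord}

/-- A forcing condition: a pair `(a, t)` with `t ⊆ a ⊆ Iio ρ.ord` and `|a| < ν`. -/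
def IsCond (ν ρ : Cardinal.{0}) (a t : Set Ordinal.{0}) : Prop :=
  a ⊆ Iio ρ.ord ∧ t ⊆ a ∧ #a < Cardinal.lift.{1} ν

/-- The basic open set determined by a condition. -/
def basicOpen (ρ : Cardinal.{0}) (a t : Set Ordinal.{0}) : Set (Set Ordinal.{0}) :=
  {x | x ⊆ Iio ρ.ord ∧ x ∩ a = t}

/-- Dense open subsets of `^ρ2` (for the `<ν`-support topology). -/
def DenseOpen (ν ρ : Cardinal.{0}) (D : Set (Set Ordinal.{0})) : Prop :=
  D ⊆ cantor ρ ∧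
  (∀ x ∈ D, ∃ a t, IsCond ν ρ a t ∧ x ∈ basicOpen ρ a t ∧ basicOpen ρ a t ⊆ D) ∧
  (∀ a t, IsCond ν ρ a t → (basicOpen ρ a t ∩ D).Nonempty)

/-- Members of `M_{ν,ρ}`. -/
def Meager (ν ρ : Cardinal.{0}) (W : Set (Set Ordinal.{0})) : Prop :=
  W ⊆ cantor ρ ∧ ∃ X : Set (Set (Set Ordinal.{0})), X.Nonempty ∧
    #X ≤ Cardinal.lift.{1} ν ∧ (∀ D ∈ X, DenseOpen ν ρ D) ∧ W ∩ ⋂₀ X = ∅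

/-- The covering number for category `cov(M_{ν,ρ})`. -/
def covM (ν ρ : Cardinal.{0}) : Cardinal.{0} :=
  leastCard fun Y : Set (Set (Set Ordinal.{0})) =>
    (∀ W ∈ Y, Meager ν ρ W) ∧ ⋃₀ Y = cantor ρ

/-- A (`κ`-complete) ideal on `κ`. -/
structure IdealK (κ : Cardinal.{0}) where
  mem : Set (Set Ordinal.{0})
  subset_iio : ∀ A ∈ mem, A ⊆ Iio κ.ord
  singleton_mem : ∀ α < κ.ord, {α} ∈ mem
  subset_mem : ∀ A ∈ mem, ∀ B ⊆ A, B ∈ mem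
  sUnion_mem : ∀ X : Set (Set Ordinal.{0}), X ⊆ mem → #X < Cardinal.lift.{1} κ → ⋃₀ X ∈ mem
  ne_top : Iio κ.ord ∉ mem

/-- `J⁺`, the sets (⊆ κ) not in the ideal. -/
def IdealK.plus {κ : Cardinal.{0}} (J : IdealK κ) : Set (Set Ordinal.{0}) :=
  {A | A ⊆ Iio κ.ord ∧ A ∉ J.mem}

/-- `cof(J)`. -/
def IdealK.cof {κ : Cardinal.{0}} (J : IdealK κ) : Cardinal.{0} :=
  leastCard fun X : Set (Set Ordinal.{0}) =>
    X ⊆ J.mem ∧ ∀ A, A ∈ J.mem ↔ ∃ B ∈ X, A ⊆ B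

/-- `cof̄(J)`. -/
def IdealK.cofBar {κ : Cardinal.{0}} (J : IdealK κ) : Cardinal.{0} :=
  leastCard fun X : Set (Set Ordinal.{0}) =>
    X ⊆ J.mem ∧ ∀ A ∈ J.mem, ∃ x ⊆ X, #x < Cardinal.lift.{1} κ ∧ A ⊆ ⋃₀ x

/-- `non_κ(P)`. -/
def nonK (κ : Cardinal.{0}) (P : IdealK κ → Prop) : Cardinal.{0} :=
  sInf {c | ∃ J : IdealK κ, J.cof = c ∧ ¬ P J}

/-- `non̄_κ(P)`. -/
def nonBarK (κ : Cardinal.{0}) (P : IdealK κ → Prop) : Cardinal.{0} :=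
  sInf {c | ∃ J : IdealK κ, J.cofBar = c ∧ ¬ P J}

/-- Weak `P`-point. -/
def WeakPPoint {κ : Cardinal.{0}} (J : IdealK κ) : Prop :=
  ∀ A ∈ J.plus, ∀ f : Ordinal.{0} → Ordinal.{0},
    (∀ α ∈ A, f α < κ.ord) → (∀ β, {α ∈ A | f α = β} ∈ J.mem) →
    ∃ B ∈ J.plus, B ⊆ A ∧ ∀ β, #{α ∈ B | f α = β} < Cardinal.lift.{1} κ

/-- Weak `Q`-point. -/
def WeakQPoint {κ : Cardinal.{0}} (J : IdealK κ) : Prop :=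
  ∀ A ∈ J.plus, ∀ g ∈ funOn κ,
    ∃ B ∈ J.plus, B ⊆ A ∧ ∀ α ∈ B, ∀ β ∈ B, α < β → g α < β

/-- Weakly selective ideal. -/
def WeaklySelective {κ : Cardinal.{0}} (J : IdealK κ) : Prop :=
  WeakPPoint J ∧ WeakQPoint J

/-- Weak semi-`Q`-point. -/
def WeakSemiQPoint {κ : Cardinal.{0}} (J : IdealK κ) : Prop :=
  ∀ A ∈ J.plus, ∀ f : Ordinal.{0} → Ordinal.{0},
    (∀ α ∈ A, f α < κ.ord) →
    (∀ β, #{α ∈ A | f α = β} < Cardinal.lift.{1} κ) →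
    ∃ C ∈ J.plus, C ⊆ A ∧ ∀ β < κ.ord, #{α ∈ C | f α = β} ≤ Cardinal.lift.{1} β.card

/-- `P_κ(λ)`, coded as the small subsets of `Iio λ.ord`. -/
def smallSet (κ lam : Cardinal.{0}) : Set (Set Ordinal.{0}) :=
  {a | a ⊆ Iio lam.ord ∧ #a < Cardinal.lift.{1} κ}

/-- The ideal `I_{κ,λ}` of noncofinal subsets of `P_κ(λ)`. -/
def Ikl (κ lam : Cardinal.{0}) : Set (Set (Set Ordinal.{0})) :=
  {A | A ⊆ smallSet κ lam ∧ ∃ a ∈ smallSet κ lam, ∀ b ∈ A, ¬ a ⊆ b}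

/-- A (`κ`-complete fine) ideal on `P_κ(λ)`. -/
structure IdealP (κ lam : Cardinal.{0}) where
  mem : Set (Set (Set Ordinal.{0}))
  subset_pk : ∀ A ∈ mem, A ⊆ smallSet κ lam
  fine : Ikl κ lam ⊆ mem
  subset_mem : ∀ A ∈ mem, ∀ B ⊆ A, B ∈ mem
  sUnion_mem : ∀ X : Set (Set (Set Ordinal.{0})), X ⊆ mem →
    #X < Cardinal.lift.{1} κ → ⋃₀ X ∈ mem
  ne_top : smallSet κ lam ∉ mem

/-- `H⁺` computed from the underlying collection `Hm` of an ideal on `P_κ(λ)`. -/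
def plusOf (κ lam : Cardinal.{0}) (Hm : Set (Set (Set Ordinal.{0}))) :
    Set (Set (Set Ordinal.{0})) :=
  {A | A ⊆ smallSet κ lam ∧ A ∉ Hm}

/-- `H⁺`. -/
def IdealP.plus {κ lam : Cardinal.{0}} (H : IdealP κ lam) : Set (Set (Set Ordinal.{0})) :=
  plusOf κ lam H.mem

/-- `cof(H)`. -/
def IdealP.cof {κ lam : Cardinal.{0}} (H : IdealP κ lam) : Cardinal.{0} :=
  leastCard fun X : Set (Set (Set Ordinal.{0})) =>
    X ⊆ H.mem ∧ ∀ A, A ∈ H.mem ↔ ∃ B ∈ X, A ⊆ B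

/-- `cof̄(H)`. -/
def IdealP.cofBar {κ lam : Cardinal.{0}} (H : IdealP κ lam) : Cardinal.{0} :=
  leastCard fun X : Set (Set (Set Ordinal.{0})) =>
    X ⊆ H.mem ∧ ∀ A ∈ H.mem, ∃ x ⊆ X, #x < Cardinal.lift.{1} κ ∧ A ⊆ ⋃₀ x

/-- `d^κ_{κ,λ}`. -/
def domP (κ lam : Cardinal.{0}) : Cardinal.{0} :=
  leastCard fun F : Set (Ordinal.{0} → Set Ordinal.{0}) =>
    (∀ f ∈ F, ∀ α < κ.ord, f α ∈ smallSet κ lam) ∧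
    ∀ g : Ordinal.{0} → Set Ordinal.{0}, (∀ α < κ.ord, g α ∈ smallSet κ lam) →
      ∃ f ∈ F, ∀ α < κ.ord, g α ⊆ f α

/-- A maximal almost disjoint family of size `≥ κ` for `H` (a member of `M_H^{≥κ}`). -/
def IsMad {κ lam : Cardinal.{0}} (H : IdealP κ lam) (Q : Set (Set (Set Ordinal.{0}))) : Prop :=
  Q ⊆ H.plus ∧ Cardinal.lift.{1} κ ≤ #Q ∧
  (∀ A ∈ Q, ∀ B ∈ Q, A ≠ B → A ∩ B ∈ H.mem) ∧
  ∀ C ∈ H.plus, ∃ A ∈ Q, A ∩ C ∈ H.plus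

/-- The (small) cardinal `c` with `lift c = c'`, used to pull `λ^{<κ} = |P_κ(λ)|` down. -/
def downCard (c : Cardinal.{1}) : Cardinal.{0} :=
  sInf {d : Cardinal.{0} | Cardinal.lift.{1} d = c}

open Classical in
/-- The number `a_H`. -/
def aNum {κ lam : Cardinal.{0}} (H : IdealP κ lam) : Cardinal.{0} :=
  if ∃ Q, IsMad H Q then sInf {c | ∃ Q, IsMad H Q ∧ Cardinal.lift.{1} c = #Q}
  else 2 ^ Order.succ (downCard #(smallSet κ lam))

/-- Weak `π`-point. -/
def WeakPiPoint {κ lam : Cardinal.{0}} (H : IdealP κ lam) : Prop :=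
  ∀ f : Ordinal.{0} → Set (Set Ordinal.{0}), (∀ α < κ.ord, f α ∈ H.mem) →
    ∀ A ∈ H.plus, ∃ B ∈ H.plus, B ⊆ A ∧ ∀ α < κ.ord, B ∩ f α ∈ Ikl κ lam

/-- `∪(a ∩ κ)`. -/
def supK (κ : Cardinal.{0}) (a : Set Ordinal.{0}) : Ordinal.{0} :=
  sSup (a ∩ Iio κ.ord)

/-- The relation `a ≺ b`. -/
def prec (κ : Cardinal.{0}) (a b : Set Ordinal.{0}) : Prop :=
  a ⊆ b ∧ supK κ a < supK κ b

/-- `[A]_κ²`. -/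
def pairsK (κ : Cardinal.{0}) (A : Set (Set Ordinal.{0})) : Set (Ordinal.{0} × Set Ordinal.{0}) :=
  {p | ∃ a ∈ A, ∃ b ∈ A, supK κ a < supK κ b ∧ p = (supK κ a, b)}

/-- `[A]_≺²`. -/
def pairsPrec (κ : Cardinal.{0}) (A : Set (Set Ordinal.{0})) :
    Set (Ordinal.{0} × Set Ordinal.{0}) :=
  {p | ∃ a ∈ A, ∃ b ∈ A, prec κ a b ∧ p = (supK κ a, b)}

/-- `[A]_{κ,κ}²`. -/
def pairsKK (κ : Cardinal.{0}) (A : Set (Set Ordinal.{0})) : Set (Ordinal.{0} × Ordinal.{0}) :=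
  {p | ∃ a ∈ A, ∃ b ∈ A, supK κ a < supK κ b ∧ p = (supK κ a, supK κ b)}

/-- `S` is a set of ordinals of order type `α`. -/
def OrdType (S : Set Ordinal.{0}) (α : Ordinal.{0}) : Prop :=
  ∃ e : Ordinal.{0} → Ordinal.{0},
    (∀ i < α, ∀ j < α, i < j → e i < e j) ∧ e '' Iio α = S

/-- `(B, ≺)` has order type `α`. -/
def OrdTypePrec (κ : Cardinal.{0}) (B : Set (Set Ordinal.{0})) (α : Ordinal.{0}) : Prop :=
  ∃ e : Ordinal.{0} → Set Ordinal.{0},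
    (∀ i < α, ∀ j < α, i < j → prec κ (e i) (e j)) ∧ e '' Iio α = B

/-- The partition relation `κ → (κ, θ)²`. -/
def ArrowKTheta (κ : Cardinal.{0}) (θ : Ordinal.{0}) : Prop :=
  ∀ f : Ordinal.{0} → Ordinal.{0} → Fin 2, ∃ A ⊆ Iio κ.ord,
    (OrdType A κ.ord ∧ ∀ α ∈ A, ∀ β ∈ A, α < β → f α β = 0) ∨
    (OrdType A θ ∧ ∀ α ∈ A, ∀ β ∈ A, α < β → f α β = 1)

/-- `κ` is weakly compact. -/
def WeaklyCompact (κ : Cardinal.{0}) : Prop :=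
  ∀ f : Ordinal.{0} → Ordinal.{0} → Fin 2, ∃ A ⊆ Iio κ.ord,
    OrdType A κ.ord ∧ ∃ i, ∀ α ∈ A, ∀ β ∈ A, α < β → f α β = i

/-- The partition relation `J⁺ → (J⁺, α)²` for an ideal on `κ`. -/
def ArrowJ {κ : Cardinal.{0}} (J : IdealK κ) (α : Ordinal.{0}) : Prop :=
  ∀ A ∈ J.plus, ∀ f : Ordinal.{0} → Ordinal.{0} → Fin 2,
    ∃ B ⊆ A, (B ∈ J.plus ∧ ∀ β ∈ B, ∀ γ ∈ B, β < γ → f β γ = 0) ∨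
             (OrdType B α ∧ ∀ β ∈ B, ∀ γ ∈ B, β < γ → f β γ = 1)

/-- The square bracket relation `J⁺ → [J⁺]_ρ²` for an ideal on `κ`. -/
def SqBrJ {κ : Cardinal.{0}} (J : IdealK κ) (ρ : Cardinal.{0}) : Prop :=
  ∀ A ∈ J.plus, ∀ f : Ordinal.{0} → Ordinal.{0} → Ordinal.{0},
    (∀ β ∈ A, ∀ γ ∈ A, β < γ → f β γ < ρ.ord) →
    ∃ B ∈ J.plus, B ⊆ A ∧ {ξ | ∃ β ∈ B, ∃ γ ∈ B, β < γ ∧ f β γ = ξ} ≠ Iio ρ.ord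

/-- `H⁺ →_κ (H⁺, α)²`. -/
def ArrowP (κ lam : Cardinal.{0}) (Hm : Set (Set (Set Ordinal.{0}))) (α : Ordinal.{0}) : Prop :=
  ∀ F : Ordinal.{0} → Set Ordinal.{0} → Fin 2, ∀ A ∈ plusOf κ lam Hm,
    ∃ B ⊆ A, (B ∈ plusOf κ lam Hm ∧ ∀ p ∈ pairsK κ B, F p.1 p.2 = 0) ∨
             (OrdTypePrec κ B α ∧ ∀ p ∈ pairsK κ B, F p.1 p.2 = 1)

/-- `H⁺ →_{κ,κ} (H⁺, α)²`. -/
def ArrowPKK (κ lam : Cardinal.{0}) (Hm : Set (Set (Set Ordinal.{0}))) (α : Ordinal.{0}) : Prop :=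
  ∀ F : Ordinal.{0} → Ordinal.{0} → Fin 2, ∀ A ∈ plusOf κ lam Hm,
    ∃ B ⊆ A, (B ∈ plusOf κ lam Hm ∧ ∀ p ∈ pairsKK κ B, F p.1 p.2 = 0) ∨
             (OrdTypePrec κ B α ∧ ∀ p ∈ pairsKK κ B, F p.1 p.2 = 1)

/-- `H⁺ →_{κ,κ} (H⁺; α)²`. -/
def ArrowPKKsemi (κ lam : Cardinal.{0}) (Hm : Set (Set (Set Ordinal.{0}))) (α : Ordinal.{0}) :
    Prop :=
  ∀ F : Ordinal.{0} → Ordinal.{0} → Fin 2, ∀ A ∈ plusOf κ lam Hm,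
    ∃ B ⊆ A, (B ∈ plusOf κ lam Hm ∧ ∀ p ∈ pairsKK κ B, F p.1 p.2 = 0) ∨
             (OrdType {o | ∃ a ∈ B, supK κ a = o} α ∧ ∀ p ∈ pairsKK κ B, F p.1 p.2 = 1)

/-- `H⁺ →_κ (H⁺)²`. -/
def ArrowPConst (κ lam : Cardinal.{0}) (Hm : Set (Set (Set Ordinal.{0}))) : Prop :=
  ∀ F : Ordinal.{0} → Set Ordinal.{0} → Fin 2, ∀ A ∈ plusOf κ lam Hm,
    ∃ B ∈ plusOf κ lam Hm, B ⊆ A ∧ ∃ i, ∀ p ∈ pairsK κ B, F p.1 p.2 = i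

/-- `H⁺ →_{κ,κ} [H⁺]_ρ²`. -/
def SqBrPKK (κ lam : Cardinal.{0}) (Hm : Set (Set (Set Ordinal.{0}))) (ρ : Cardinal.{0}) : Prop :=
  ∀ F : Ordinal.{0} → Ordinal.{0} → Ordinal.{0},
    (∀ α β : Ordinal.{0}, α < β → β < κ.ord → F α β < ρ.ord) →
    ∀ A ∈ plusOf κ lam Hm, ∃ B ∈ plusOf κ lam Hm, B ⊆ A ∧
      {ξ | ∃ p ∈ pairsKK κ B, F p.1 p.2 = ξ} ≠ Iio ρ.ord

/-- The class `K(κ,λ)`. -/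
def Kset (κ lam : Cardinal.{0}) : Set Cardinal.{0} :=
  {σ | lam ≤ σ ∧ ∃ T ⊆ smallSet κ lam, Cardinal.lift.{1} σ = #T ∧
    ∀ a ∈ smallSet κ lam, #{t ∈ T | t ⊆ a} < Cardinal.lift.{1} κ}

end

end PaperFormal

namespace PaperFormal

/-!
Call a family `G` of functions `κ → κ` meetable if one `g : κ → κ` agrees somewhere with every
member of `G`; then `U_κ` is the least size of a non-meetable family. Splitting `κ` into `κ`
copies of itself shows that a union of at most `κ` families is meetable as soon as, for each of
them, every family of at most its size is meetable. Singletons then give `κ < U_κ`. If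
`cof U_κ ≤ κ`, a non-meetable family of size `U_κ` is a union of at most `κ` subfamilies of size
`< U_κ`, each meetable by minimality of `U_κ`, a contradiction.
-/

universe u v

theorem exists_iUnion_eq_of_lift_mk_eq {α : Type v} {s : Set α} {c : Cardinal.{u}}
    (hc : ℵ₀ ≤ c) (hs : lift.{u} #s = lift.{v} c) :
    ∃ (ι : Type u) (t : ι → Set α), #ι = c.ord.cof ∧ (∀ i, lift.{u} #(t i) < lift.{v} c) ∧
      ⋃ i, t i = s := by
  obtain ⟨E⟩ : Nonempty (c.ord.ToType ≃ s) := lift_mk_eq'.1 (by simpa using hs.symm)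
  obtain ⟨r, hr, hrcard⟩ := Order.exists_cof_eq c.ord.ToType
  have := Cardinal.noMaxOrder hc
  refine ⟨r, fun x => (Subtype.val ∘ E) '' Iio x.1, by simpa using hrcard, fun x => ?_, ?_⟩
  · refine mk_image_le_lift.trans_lt ?_
    simpa using mk_Iio_lt x.1
  · rw [← image_iUnion, ← biUnion_eq_iUnion r (fun x _ => Iio x),
      isCofinal_iff_iUnion_Iio_eq_univ.1 hr, image_univ, range_comp, E.range_eq_univ, image_univ,
      Subtype.range_coe]

theorem leastCard_le {X : Type 1} {P : Set X → Prop} {F : Set X} (hF : P F) {c : Cardinal.{0}}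
    (hc : lift c = #F) : leastCard P ≤ c :=
  csInf_le' ⟨F, hF, hc⟩

theorem exists_lift_leastCard_eq {X : Type 1} {P : Set X → Prop} {F : Set X} (hF : P F)
    {c : Cardinal.{0}} (hc : #F ≤ lift c) : ∃ F₀, P F₀ ∧ lift (leastCard P) = #F₀ := by
  obtain ⟨d, hd⟩ := mem_range_lift_of_le hc
  exact csInf_mem (s := {c | ∃ F, P F ∧ lift c = #F}) ⟨d, F, hF, hd⟩

def Meetable (κ : Cardinal.{0}) (G : Set (Ordinal.{0} → Ordinal.{0})) : Prop :=
  ∃ g ∈ funOn κ, ∀ f ∈ G, ∃ α < κ.ord, f α = g α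

section Meetable

variable {κ : Cardinal.{0}}

theorem meetable_of_subsingleton (hκ : 0 < κ) {G : Set (Ordinal.{0} → Ordinal.{0})}
    (hG : G ⊆ funOn κ) (hs : G.Subsingleton) : Meetable κ G := by
  have hpos : 0 < κ.ord := ord_pos.2 hκ
  rcases hs.eq_empty_or_singleton with rfl | ⟨f, rfl⟩
  · exact ⟨fun _ => 0, fun _ _ => hpos, by simp⟩
  · exact ⟨f, hG rfl, fun f' hf' => ⟨0, hpos, by rw [hf']⟩⟩

theorem not_meetable_iff {F : Set (Ordinal.{0} → Ordinal.{0})} :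
    (∀ g ∈ funOn κ, ∃ f ∈ F, {α | α < κ.ord ∧ f α = g α} = ∅) ↔ ¬ Meetable κ F := by
  simp [Meetable, eq_empty_iff_forall_notMem]

theorem meetable_iUnion {ι : Type u} (hκ : ℵ₀ ≤ κ) (hι : #ι ≤ lift.{u} κ)
    {F : ι → Set (Ordinal.{0} → Ordinal.{0})} (hF : ∀ i, F i ⊆ funOn κ)
    (hsmall : ∀ i, ∀ G ⊆ funOn κ, #G ≤ #(F i) → Meetable κ G) :
    Meetable κ (⋃ i, F i) := by
  -- the `i`-th piece is pulled back to the `i`-th column of `κ × κ ↪ κ`, where it is met by `h i`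
  obtain ⟨p⟩ : Nonempty (ι × Iio κ.ord ↪ Iio κ.ord) := by
    refine lift_mk_le'.1 ?_
    simp only [mk_prod, mk_Iio_ordinal, card_ord, lift_mul, lift_lift]
    calc lift.{1} #ι * lift.{max 1 u} κ ≤ lift κ * lift κ := by
          gcongr; simpa using lift_le.{1}.2 hι
      _ = lift κ := mul_eq_self (by simpa using hκ)
  have hp : Function.Injective fun q => (p q : Ordinal.{0}) :=
    Subtype.val_injective.comp p.injective
  have hpos : 0 < κ.ord := ord_pos.2 (aleph0_pos.trans_le hκ)
  let shift (i : ι) (f : Ordinal.{0} → Ordinal.{0}) (β : Ordinal.{0}) : Ordinal.{0} :=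
    if hβ : β < κ.ord then f (p (i, ⟨β, hβ⟩)) else 0
  have hshift : ∀ i, shift i '' F i ⊆ funOn κ := by
    rintro i _ ⟨f, hf, rfl⟩ β hβ
    simpa [shift, hβ] using hF i hf _ (p (i, ⟨β, hβ⟩)).2
  choose h hh hmeet using fun i => hsmall i _ (hshift i) mk_image_le
  refine ⟨Function.extend (fun q => (p q : Ordinal.{0})) (fun q => h q.1 q.2) fun _ => 0, ?_, ?_⟩
  · intro α hα
    by_cases hrange : ∃ q, (p q : Ordinal.{0}) = α
    · obtain ⟨q, rfl⟩ := hrange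
      rw [hp.extend_apply]
      exact hh q.1 _ q.2.2
    · rw [Function.extend_apply' _ _ _ hrange]
      exact hpos
  · simp only [mem_iUnion]
    rintro f ⟨i, hf⟩
    obtain ⟨β, hβ, hfβ⟩ := hmeet i _ ⟨f, hf, rfl⟩
    refine ⟨p (i, ⟨β, hβ⟩), (p _).2, ?_⟩
    rw [hp.extend_apply]
    simpa [shift, hβ] using hfβ

end Meetable

section Uneq

variable {κ : Cardinal.{0}}

theorem exists_not_meetable_mk_eq_uneq (hκ : ℵ₀ ≤ κ) :
    ∃ F ⊆ funOn κ, ¬ Meetable κ F ∧ #F = lift (uneq κ) := by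
  let zeroExtend (h : Iio κ.ord → Iio κ.ord) (α : Ordinal.{0}) : Ordinal.{0} :=
    if hα : α < κ.ord then h ⟨α, hα⟩ else 0
  have hsub : range zeroExtend ⊆ funOn κ := by
    rintro _ ⟨h, rfl⟩ α hα
    simp only [zeroExtend, dif_pos hα]
    exact (h ⟨α, hα⟩).2
  -- every `g` is avoided by `α ↦ g α + 1`, which lies below `κ` as `κ.ord` is a limit
  have hnot : ¬ Meetable κ (range zeroExtend) := by
    rintro ⟨g, hg, hmeet⟩
    have hsucc : ∀ a : Iio κ.ord, Order.succ (g a) < κ.ord := fun a =>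
      (isSuccLimit_ord hκ).succ_lt (hg a a.2)
    obtain ⟨α, hα, hfg⟩ := hmeet _ ⟨fun a => ⟨_, hsucc a⟩, rfl⟩
    simp [zeroExtend, hα] at hfg
  have hcard : #(range zeroExtend) ≤ lift (κ ^ κ) := mk_range_le.trans (by simp)
  obtain ⟨F, ⟨hFsub, hF⟩, hFcard⟩ :
      ∃ F : Set (Ordinal.{0} → Ordinal.{0}), _ ∧ lift (uneq κ) = #F :=
    exists_lift_leastCard_eq ⟨hsub, not_meetable_iff.2 hnot⟩ hcard
  exact ⟨F, hFsub, not_meetable_iff.1 hF, hFcard.symm⟩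

theorem meetable_of_mk_lt_uneq {G : Set (Ordinal.{0} → Ordinal.{0})} (hG : G ⊆ funOn κ)
    (hlt : #G < lift (uneq κ)) : Meetable κ G := by
  obtain ⟨c, hc⟩ := mem_range_lift_of_le hlt.le
  by_contra hnot
  exact (lift_lt.1 (hc ▸ hlt)).not_ge (leastCard_le ⟨hG, not_meetable_iff.2 hnot⟩ hc)

theorem lt_uneq (hκ : ℵ₀ ≤ κ) : κ < uneq κ := by
  by_contra! hle
  obtain ⟨F, hFsub, hF, hFcard⟩ := exists_not_meetable_mk_eq_uneq hκ
  have hsingletons : ∀ f : F, ∀ G ⊆ funOn κ, #G ≤ #({f.1} : Set _) → Meetable κ G :=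
    fun _ G hG hGf => meetable_of_subsingleton (aleph0_pos.trans_le hκ) hG
      (mk_le_one_iff_set_subsingleton.1 (by simpa using hGf))
  have := meetable_iUnion hκ (by simpa [hFcard] using hle)
    (fun f : F => singleton_subset_iff.2 (hFsub f.2)) hsingletons
  exact hF (by simpa using this)

end Uneq

theorem cof_uneq_gt_general (κ : Cardinal.{0}) (huc : ℵ₀ < κ) :
    κ < (uneq κ).ord.cof := by
  have hκ := huc.le
  have hU : ℵ₀ ≤ uneq κ := hκ.trans (lt_uneq hκ).le
  by_contra! hcof
  obtain ⟨F, hFsub, hF, hFcard⟩ := exists_not_meetable_mk_eq_uneq hκ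
  obtain ⟨ι, t, hι, ht, rfl⟩ := exists_iUnion_eq_of_lift_mk_eq hU (by simpa using hFcard)
  refine hF (meetable_iUnion hκ (by simpa [hι] using hcof) (fun i => ?_) fun i G hG hGt => ?_)
  · exact (subset_iUnion t i).trans hFsub
  · exact meetable_of_mk_lt_uneq hG (hGt.trans_lt (by simpa using ht i))

/-- For every regular uncountable cardinal `κ`,
the cofinality of the unequality number `U_κ` is greater than `κ`. -/
theorem cof_uneq_gt (κ : Cardinal.{0}) (hreg : κ.IsRegular) (huc : ℵ₀ < κ) :
    κ < (uneq κ).ord.cof :=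
  cof_uneq_gt_general κ huc

end PaperFormal
end

section
/- Let H be an ideal on P_κ(λ) with cof(H) < d^κ_{κ,λ}. Then a_H > κ and H is a weak π-point. -/
open Cardinal Set

/-!
Both claims rest on one extraction principle. Split a set `U ⊆ P_κ(λ)` into `κ` layers by an
index function so that every tail (the layers from `β` on) is `H`-positive. For
`g : κ → P_κ(λ)` let `B_g` consist of the `x ∈ U` whose index `i` has `g(i) ⊄ x`. If every `B_g`
were in `H`, a cofinal family `X ⊆ H` of size `cof(H)` would give the dominating family
`{h_D : D ∈ X}`, where `h_D(β)` is any element of the `β`-th tail outside `D`. So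
`cof(H) < d^κ_{κ,λ}` yields an `H`-positive `B_g`, which meets the first `α` layers in a
noncofinal set: none of its elements there contains `⋃_{β ≤ α} g(β)`.

Layering `A` by the first `α` with `x ∈ f(α)` gives the weak `π`-point property. A mad family
`{e_i : i < κ}`, layered by the first `i` with `x ∈ e_i`, would yield an `H`-positive set
almost disjoint from every `e_i`, so `a_H > κ`.
-/

namespace PaperFormal

universe u

variable {κ lam : Cardinal.{0}}

lemma small_of_forall_subset_smallSet {S : Set (Set (Set Ordinal.{0}))}
    (hS : ∀ A ∈ S, A ⊆ smallSet κ lam) : Small.{0} S :=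
  small_subset (s := 𝒫 𝒫 Iio lam.ord) fun A hA _ ha => (hS A hA ha).1

lemma leastCard_le_of_mk_le {X : Type 1} {P : Set X → Prop} {F : Set X} (hP : P F)
    {c : Cardinal.{0}} (hF : #F ≤ Cardinal.lift.{1} c) : leastCard P ≤ c := by
  obtain ⟨d, hd⟩ := Cardinal.mem_range_lift_of_le hF
  have hdP : d ∈ {c : Cardinal.{0} | ∃ F : Set X, P F ∧ Cardinal.lift.{1} c = #F} := ⟨F, hP, hd⟩
  exact (csInf_le' hdP).trans (Cardinal.lift_le.1 (hd ▸ hF))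

lemma exists_lift_leastCard_eq_s5 {X : Type 1} {P : Set X → Prop} {F : Set X} (hP : P F)
    [Small.{0} F] : ∃ F' : Set X, P F' ∧ Cardinal.lift.{1} (leastCard P) = #F' :=
  csInf_mem (s := {c : Cardinal.{0} | ∃ F : Set X, P F ∧ Cardinal.lift.{1} c = #F})
    ⟨_, F, hP, lift_mk_shrink'' _⟩

lemma mk_Iio_lt_lift {β : Ordinal.{0}} (hβ : β < κ.ord) : #(Iio β) < Cardinal.lift.{1} κ := by
  rwa [mk_Iio_ordinal, lift_lt, ← lt_ord]

lemma biUnion_Iic_mem_smallSet (hκ : κ.IsRegular) {g : Ordinal.{0} → Set Ordinal.{0}}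
    (hg : ∀ β < κ.ord, g β ∈ smallSet κ lam) {α : Ordinal.{0}} (hα : α < κ.ord) :
    (⋃ β ∈ Iic α, g β) ∈ smallSet κ lam := by
  have hIic : #(Iic α) < Cardinal.lift.{1} κ := by
    rw [← Order.Iio_succ]
    exact mk_Iio_lt_lift ((isSuccLimit_ord hκ.aleph0_le).succ_lt hα)
  refine ⟨iUnion₂_subset fun β hβ => (hg β (hβ.trans_lt hα)).1, ?_⟩
  exact (card_biUnion_lt_iff_forall_of_isRegular hκ.lift hIic).2 fun β hβ =>
    (hg β (lt_of_le_of_lt hβ hα)).2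

lemma lift_le_mk_smallSet (hκ : ℵ₀ ≤ κ) : Cardinal.lift.{1} lam ≤ #(smallSet κ lam) := by
  have hsub : singleton '' Iio lam.ord ⊆ smallSet κ lam := by
    rintro _ ⟨ξ, hξ, rfl⟩
    refine ⟨singleton_subset_iff.2 hξ, ?_⟩
    rw [mk_singleton]
    exact one_lt_aleph0.trans_le (by simpa using hκ)
  calc Cardinal.lift.{1} lam = #(Iio lam.ord) := by rw [mk_Iio_ordinal, card_ord]
    _ = #(singleton '' Iio lam.ord) := (mk_image_eq singleton_injective).symm
    _ ≤ #(smallSet κ lam) := mk_le_mk_of_subset hsub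

lemma le_downCard_mk_smallSet (hκ : ℵ₀ ≤ κ) : lam ≤ downCard #(smallSet κ lam) := by
  have : Small.{0} (smallSet κ lam) := small_subset (s := 𝒫 Iio lam.ord) fun _ ha => ha.1
  have hne : {d : Cardinal.{0} | Cardinal.lift.{1} d = #(smallSet κ lam)}.Nonempty :=
    ⟨_, lift_mk_shrink'' _⟩
  rw [← lift_le.{1}, downCard, csInf_mem hne]
  exact lift_le_mk_smallSet hκ

lemma empty_mem_Ikl (hκ : κ ≠ 0) : (∅ : Set (Set Ordinal.{0})) ∈ Ikl κ lam :=
  ⟨empty_subset _, ∅, ⟨empty_subset _, by simpa [pos_iff_ne_zero] using hκ⟩, fun _ hb => hb.elim⟩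

lemma Ikl_mono {A B : Set (Set Ordinal.{0})} (hB : B ∈ Ikl κ lam) (hAB : A ⊆ B) :
    A ∈ Ikl κ lam := by
  obtain ⟨hBs, a, ha, hBa⟩ := hB
  exact ⟨hAB.trans hBs, a, ha, fun b hb => hBa b (hAB hb)⟩

noncomputable def firstIdx (f : Ordinal.{0} → Set (Set Ordinal.{0})) (x : Set Ordinal.{0}) :
    Ordinal.{0} :=
  sInf {α | x ∈ f α}

lemma firstIdx_le {f : Ordinal.{0} → Set (Set Ordinal.{0})} {x : Set Ordinal.{0}} {α : Ordinal.{0}}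
    (h : x ∈ f α) : firstIdx f x ≤ α :=
  csInf_le' h

lemma mem_firstIdx {f : Ordinal.{0} → Set (Set Ordinal.{0})} {x : Set Ordinal.{0}} {α : Ordinal.{0}}
    (h : x ∈ f α) : x ∈ f (firstIdx f x) :=
  csInf_mem (s := {α | x ∈ f α}) ⟨α, h⟩

lemma exists_bijOn_of_mk_eq {α β : Type u} [Nonempty β] {s : Set α} {t : Set β}
    (h : #s = #t) : ∃ e : α → β, BijOn e s t := by
  classical
  obtain ⟨E⟩ := Cardinal.eq.1 h
  refine ⟨fun a => if ha : a ∈ s then E ⟨a, ha⟩ else Classical.arbitrary β, fun a ha => ?_,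
    fun a ha b hb hab => ?_, fun b hb => ⟨E.symm ⟨b, hb⟩, (E.symm ⟨b, hb⟩).2, by simp⟩⟩
  · simp only [dif_pos ha, Subtype.coe_prop]
  · simp only [dif_pos ha, dif_pos hb] at hab
    exact congrArg Subtype.val (E.injective (Subtype.ext hab))

namespace IdealP

variable (H : IdealP κ lam)

lemma union_mem (hκ : ℵ₀ ≤ κ) {A B : Set (Set Ordinal.{0})} (hA : A ∈ H.mem) (hB : B ∈ H.mem) :
    A ∪ B ∈ H.mem := by
  rw [← sUnion_pair]
  refine H.sUnion_mem _ (pair_subset hA hB) ?_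
  exact (Set.toFinite _).lt_aleph0.trans_le (by simpa using hκ)

lemma biUnion_Iio_mem {β : Ordinal.{0}} (hβ : β < κ.ord) {s : Ordinal.{0} → Set (Set Ordinal.{0})}
    (hs : ∀ i < β, s i ∈ H.mem) : (⋃ i ∈ Iio β, s i) ∈ H.mem := by
  rw [← sUnion_image]
  exact H.sUnion_mem _ (image_subset_iff.2 hs) (mk_image_le.trans_lt (mk_Iio_lt_lift hβ))

lemma notMem_of_subset_union (hκ : ℵ₀ ≤ κ) {A B C : Set (Set Ordinal.{0})} (hA : A ∉ H.mem)
    (hC : C ∈ H.mem) (hABC : A ⊆ B ∪ C) : B ∉ H.mem := fun hB =>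
  hA (H.subset_mem _ (H.union_mem hκ hB hC) A hABC)

lemma exists_cofinal_mk_eq_cof :
    ∃ X ⊆ H.mem, (∀ A ∈ H.mem, ∃ D ∈ X, A ⊆ D) ∧ #X = Cardinal.lift.{1} H.cof := by
  have := small_of_forall_subset_smallSet H.subset_pk
  obtain ⟨X, ⟨hXH, hXcof⟩, hX⟩ := exists_lift_leastCard_eq_s5 (F := H.mem)
    (P := fun X => X ⊆ H.mem ∧ ∀ A, A ∈ H.mem ↔ ∃ B ∈ X, A ⊆ B)
    ⟨subset_rfl, fun A => ⟨fun hA => ⟨A, hA, subset_rfl⟩,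
      fun ⟨B, hB, hAB⟩ => H.subset_mem B hB A hAB⟩⟩
  exact ⟨X, hXH, fun A hA => (hXcof A).1 hA, hX.symm⟩

section Layers

variable {U : Set (Set Ordinal.{0})} {idx : Set Ordinal.{0} → Ordinal.{0}}

lemma domP_le_cof_of_tails_notMem (hκ : κ.IsRegular) (hU : U ⊆ smallSet κ lam)
    (htail : ∀ β < κ.ord, {x ∈ U | β ≤ idx x} ∉ H.mem)
    (hmem : ∀ g : Ordinal.{0} → Set Ordinal.{0}, (∀ α < κ.ord, g α ∈ smallSet κ lam) →
      {x ∈ U | ¬ g (idx x) ⊆ x} ∈ H.mem) :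
    domP κ lam ≤ H.cof := by
  obtain ⟨X, hXH, hXcof, hX⟩ := H.exists_cofinal_mk_eq_cof
  have hpick : ∀ D ∈ X, ∀ β < κ.ord, ∃ x ∈ {x ∈ U | β ≤ idx x}, x ∉ D := fun D hD β hβ =>
    not_subset.1 fun h => htail β hβ (H.subset_mem D (hXH hD) _ h)
  choose! pick hpick_tail hpick_notMem using hpick
  refine leastCard_le_of_mk_le (F := pick '' X) ⟨?_, fun g hg => ?_⟩ (mk_image_le.trans hX.le)
  · rintro _ ⟨D, hD, rfl⟩ β hβ
    exact hU (hpick_tail D hD β hβ).1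
  -- `g` is made cumulative so that `pick D β`, which lies in a layer `≥ β`, contains `g β`
  obtain ⟨D, hD, hBD⟩ := hXcof _ (hmem (fun i => ⋃ β ∈ Iic i, g β)
    fun i hi => biUnion_Iic_mem_smallSet hκ hg hi)
  refine ⟨pick D, mem_image_of_mem _ hD, fun β hβ => ?_⟩
  obtain ⟨hxU, hβx⟩ := hpick_tail D hD β hβ
  have hcum : (⋃ γ ∈ Iic (idx (pick D β)), g γ) ⊆ pick D β := by
    by_contra h
    exact hpick_notMem D hD β hβ (hBD ⟨hxU, h⟩)
  exact (subset_biUnion_of_mem (u := g) (mem_Iic.2 hβx)).trans hcum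

lemma exists_plus_sep_le_mem_Ikl (hκ : κ.IsRegular) (hcof : H.cof < domP κ lam)
    (hU : U ⊆ smallSet κ lam) (htail : ∀ β < κ.ord, {x ∈ U | β ≤ idx x} ∉ H.mem) :
    ∃ B ∈ H.plus, B ⊆ U ∧ ∀ α < κ.ord, {x ∈ B | idx x ≤ α} ∈ Ikl κ lam := by
  obtain ⟨g, hg, hB⟩ : ∃ g : Ordinal.{0} → Set Ordinal.{0},
      (∀ α < κ.ord, g α ∈ smallSet κ lam) ∧ {x ∈ U | ¬ g (idx x) ⊆ x} ∉ H.mem := by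
    by_contra! h
    exact hcof.not_ge (H.domP_le_cof_of_tails_notMem hκ hU htail h)
  refine ⟨_, ⟨fun x hx => hU hx.1, hB⟩, sep_subset _ _, fun α hα => ?_⟩
  refine ⟨fun x hx => hU hx.1.1, ⋃ β ∈ Iic α, g β, biUnion_Iic_mem_smallSet hκ hg hα, ?_⟩
  rintro x ⟨⟨-, hgx⟩, hxα⟩ hsub
  exact hgx ((subset_biUnion_of_mem (u := g) (mem_Iic.2 hxα)).trans hsub)

end Layers

theorem weakPiPoint_of_cof_lt (hκ : κ.IsRegular) (hcof : H.cof < domP κ lam) :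
    WeakPiPoint H := by
  intro f hf A ⟨hAs, hAH⟩
  by_cases hrest : {x ∈ A | ∀ α < κ.ord, x ∉ f α} ∈ H.mem
  swap
  · refine ⟨_, ⟨fun x hx => hAs hx.1, hrest⟩, sep_subset _ _, fun α hα => ?_⟩
    exact Ikl_mono (empty_mem_Ikl hκ.pos.ne') fun x hx => hx.1.2 α hα hx.2
  set U := {x ∈ A | ∃ α < κ.ord, x ∈ f α}
  have htail : ∀ β < κ.ord, {x ∈ U | β ≤ firstIdx f x} ∉ H.mem := by
    intro β hβ
    refine H.notMem_of_subset_union hκ.aleph0_le hAH (H.union_mem hκ.aleph0_le hrest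
      (H.biUnion_Iio_mem hβ fun i hi => hf i (hi.trans hβ))) fun x hxA => ?_
    by_cases hx : ∃ α < κ.ord, x ∈ f α
    · obtain ⟨α, hα, hxα⟩ := hx
      rcases le_or_gt β (firstIdx f x) with hβx | hxβ
      · exact Or.inl ⟨⟨hxA, α, hα, hxα⟩, hβx⟩
      · exact Or.inr (Or.inr (mem_biUnion hxβ (mem_firstIdx hxα)))
    · push Not at hx
      exact Or.inr (Or.inl ⟨hxA, hx⟩)
  obtain ⟨B, hB, hBU, hBI⟩ :=
    H.exists_plus_sep_le_mem_Ikl hκ hcof (fun x hx => hAs hx.1) htail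
  exact ⟨B, hB, hBU.trans (sep_subset _ _), fun α hα =>
    Ikl_mono (hBI α hα) fun x hx => ⟨hx.1, firstIdx_le hx.2⟩⟩

lemma lt_aNum_of_forall_isMad (hκ : ℵ₀ ≤ κ) (hlt : κ < lam)
    (h : ∀ Q, IsMad H Q → Cardinal.lift.{1} κ < #Q) : κ < aNum H := by
  unfold aNum
  split_ifs with hex
  · obtain ⟨Q, hQ⟩ := hex
    have := small_of_forall_subset_smallSet fun A hA => (hQ.1 hA).1
    obtain ⟨Q', hQ', hc⟩ :=
      csInf_mem (s := {c : Cardinal.{0} | ∃ Q, IsMad H Q ∧ Cardinal.lift.{1} c = #Q})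
        ⟨_, Q, hQ, lift_mk_shrink'' _⟩
    exact lift_lt.1 (hc ▸ h Q' hQ')
  · calc κ < lam := hlt
      _ ≤ downCard #(smallSet κ lam) := le_downCard_mk_smallSet hκ
      _ < 2 ^ downCard #(smallSet κ lam) := Cardinal.cantor _
      _ ≤ _ := power_le_power_left two_ne_zero (Order.le_succ _)

end IdealP

theorem IsMad.lift_lt_mk {H : IdealP κ lam} (hκ : κ.IsRegular) (hcof : H.cof < domP κ lam)
    {Q : Set (Set (Set Ordinal.{0}))} (hQ : IsMad H Q) : Cardinal.lift.{1} κ < #Q := by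
  obtain ⟨hQH, hκQ, hQdisj, hQmax⟩ := hQ
  refine hκQ.lt_of_ne fun hQκ => ?_
  obtain ⟨e, he_maps, he_inj, he_surj⟩ :=
    exists_bijOn_of_mk_eq (s := Iio κ.ord) (t := Q) (by rw [mk_Iio_ordinal, card_ord, hQκ])
  have htail : ∀ β < κ.ord, {x ∈ ⋃₀ Q | β ≤ firstIdx e x} ∉ H.mem := by
    intro β hβ
    have hβ_disj : (⋃ j ∈ Iio β, e β ∩ e j) ∈ H.mem :=
      H.biUnion_Iio_mem hβ fun j hj => hQdisj _ (he_maps hβ) _ (he_maps (hj.trans hβ))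
        fun h => hj.ne' (he_inj hβ (hj.trans hβ) h)
    refine H.notMem_of_subset_union hκ.aleph0_le (hQH (he_maps hβ)).2 hβ_disj fun x hx => ?_
    rcases le_or_gt β (firstIdx e x) with hβx | hxβ
    · exact Or.inl ⟨⟨e β, he_maps hβ, hx⟩, hβx⟩
    · exact Or.inr (mem_biUnion hxβ ⟨hx, mem_firstIdx hx⟩)
  obtain ⟨B, hB, -, hBI⟩ := H.exists_plus_sep_le_mem_Ikl hκ hcof
    (sUnion_subset fun A hA => (hQH hA).1) htail
  obtain ⟨A, hAQ, hAB⟩ := hQmax B hB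
  obtain ⟨i, hi, rfl⟩ := he_surj hAQ
  exact hAB.2 (H.fine (Ikl_mono (hBI i hi) fun x hx => ⟨hx.2, firstIdx_le hx.1⟩))

theorem aNum_gt_and_weakPiPoint_general (κ lam : Cardinal.{0}) (hreg : κ.IsRegular)
    (hlt : κ < lam) (H : IdealP κ lam) (hcof : H.cof < domP κ lam) :
    κ < aNum H ∧ WeakPiPoint H :=
  ⟨H.lt_aNum_of_forall_isMad hreg.aleph0_le hlt fun _ hQ => hQ.lift_lt_mk hreg hcof,
    H.weakPiPoint_of_cof_lt hreg hcof⟩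

/-- If `H` is an ideal on `P_κ(λ)` with `cof(H) < d^κ_{κ,λ}`, then
`a_H > κ` and `H` is a weak `π`-point. -/
theorem aNum_gt_and_weakPiPoint (κ lam : Cardinal.{0}) (hreg : κ.IsRegular) (huc : ℵ₀ < κ)
    (hlt : κ < lam) (H : IdealP κ lam) (hcof : H.cof < domP κ lam) :
    κ < aNum H ∧ WeakPiPoint H :=
  aNum_gt_and_weakPiPoint_general κ lam hreg hlt H hcof

end PaperFormal
end
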